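/- arXiv:2008.11760 — 5 statements merged into one kernel-verified Lean document; each statement's English description precedes it below -/
import Mathlib

section
/- With Γ_{2k}(x)=2T_{2k}(x/2)+(d1-2)/(d1-1)^k and p_j(x)=U_j(x/2)-(1/(d1-1))U_{j-2}(x/2), one has the identity Γ_{2k}(x) = p_{2k}(x) - (d1-2)·( p_{2k-2}(x)/(d1-1) + p_{2k-4}(x)/(d1-1)^2 + ... + p_2(x)/(d1-1)^{k-1} ) as polynomials, for every k ≥ 1 and d1 ≥ 2. -/
/-!
In terms of the Vieta–Lucas and Vieta–Fibonacci polynomials `C n (x) = 2 T n (x/2)` and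
`S n (x) = U n (x/2)` one has `C n = S n - S (n - 2)` and `p n = S n - q S (n - 2)` with
`q = 1/(d1-1)`. Hence `q^j p (2k-2j)` telescopes in `j`: the sum on the right is
`q S (2k-2) - q^k`, and since `q (d1 - 1) = 1` the right-hand side collapses to
`S (2k) - S (2k-2) + (d1-2) q^k = Γ_{2k}`.
-/

open Polynomial

/-- `p_k(x) = U_k(x/2) - (1/(d1-1))·U_{k-2}(x/2)`. -/
noncomputable def pPoly (d1 : ℕ) (k : ℤ) : Polynomial ℝ :=
  (Polynomial.Chebyshev.U ℝ k).comp (Polynomial.C (1 / 2) * Polynomial.X) -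
    Polynomial.C (1 / ((d1 : ℝ) - 1)) *
      ((Polynomial.Chebyshev.U ℝ (k - 2)).comp (Polynomial.C (1 / 2) * Polynomial.X))

/-- `Γ_{2k}(x) = 2T_{2k}(x/2) + (d1-2)/(d1-1)^k`. -/
noncomputable def gammaEven (d1 : ℕ) (k : ℕ) : Polynomial ℝ :=
  (2 : Polynomial ℝ) *
      (Polynomial.Chebyshev.T ℝ (2 * k : ℤ)).comp (Polynomial.C (1 / 2) * Polynomial.X) +
    Polynomial.C (((d1 : ℝ) - 2) / ((d1 : ℝ) - 1) ^ k)

namespace Polynomial.Chebyshev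

theorem C_eq_S_sub_S (R : Type*) [CommRing R] (n : ℤ) : C R n = S R n - S R (n - 2) := by
  linear_combination C_eq_S_sub_X_mul_S R n + S_eq R n

end Polynomial.Chebyshev

theorem Finset.sum_Ico_pow_mul_sub_mul {R : Type*} [CommRing R] (q : R) (a : ℕ → R) {k : ℕ}
    (hk : 1 ≤ k) :
    ∑ j ∈ Finset.Ico 1 k, q ^ j * (a j - q * a (j + 1)) = q * a 1 - q ^ k * a k := by
  induction k, hk using Nat.le_induction with
  | base => simp
  | succ k hk ih =>
    rw [Finset.sum_Ico_succ_top hk, ih]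
    ring

theorem comp_half_mul_X_eq_S (n : ℤ) :
    (Chebyshev.U ℝ n).comp (C (1 / 2) * X) = Chebyshev.S ℝ n := by
  rw [Chebyshev.S_eq_U_comp_half_mul_X, invOf_eq_inv, one_div]

theorem pPoly_eq (d1 : ℕ) (n : ℤ) :
    pPoly d1 n = Chebyshev.S ℝ n - C (1 / ((d1 : ℝ) - 1)) * Chebyshev.S ℝ (n - 2) := by
  rw [pPoly, comp_half_mul_X_eq_S, comp_half_mul_X_eq_S]

theorem gammaEven_eq (d1 k : ℕ) :
    gammaEven d1 k = Chebyshev.C ℝ (2 * k) + C (((d1 : ℝ) - 2) / ((d1 : ℝ) - 1) ^ k) := by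
  rw [gammaEven, Chebyshev.C_eq_two_mul_T_comp_half_mul_X, invOf_eq_inv, one_div]

theorem sum_Icc_pow_mul_pPoly (d1 : ℕ) {k : ℕ} (hk : 1 ≤ k) :
    ∑ j ∈ Finset.Icc 1 (k - 1), C (1 / ((d1 : ℝ) - 1) ^ j) * pPoly d1 (2 * (k : ℤ) - 2 * (j : ℤ)) =
      C (1 / ((d1 : ℝ) - 1)) * Chebyshev.S ℝ (2 * k - 2) - C (1 / ((d1 : ℝ) - 1)) ^ k := by
  set a : ℕ → ℝ[X] := fun j => Chebyshev.S ℝ (2 * k - 2 * j)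
  have hsummand (j : ℕ) :
      C (1 / ((d1 : ℝ) - 1) ^ j) * pPoly d1 (2 * (k : ℤ) - 2 * (j : ℤ)) =
        C (1 / ((d1 : ℝ) - 1)) ^ j * (a j - C (1 / ((d1 : ℝ) - 1)) * a (j + 1)) := by
    rw [← one_div_pow, map_pow, pPoly_eq]
    simp only [a]
    congr 4
    push_cast
    ring
  rw [← Finset.Ico_add_one_right_eq_Icc, Nat.sub_add_cancel hk,
    Finset.sum_congr rfl fun j _ => hsummand j, Finset.sum_Ico_pow_mul_sub_mul _ _ hk]
  simp [a, mul_comm (2 : ℤ)]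

/-- The polynomial identity
`Γ_{2k} = p_{2k} - (d1-2)·( p_{2k-2}/(d1-1) + p_{2k-4}/(d1-1)² + … + p_2/(d1-1)^{k-1} )`
for every `k ≥ 1` and `d1 ≥ 2`. -/
theorem stmt_8 (d1 : ℕ) (hd1 : 2 ≤ d1) (k : ℕ) (hk : 1 ≤ k) :
    gammaEven d1 k =
      pPoly d1 (2 * k : ℤ) -
        Polynomial.C ((d1 : ℝ) - 2) *
          ∑ j ∈ Finset.Icc 1 (k - 1),
            Polynomial.C (1 / ((d1 : ℝ) - 1) ^ j) * pPoly d1 (2 * (k : ℤ) - 2 * (j : ℤ)) := by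
  have hq : C (1 / ((d1 : ℝ) - 1)) * ((d1 : ℝ[X]) - 1) = 1 := by
    rw [← map_natCast C, ← map_one C, ← map_sub, ← map_mul,
      one_div_mul_cancel (sub_ne_zero.mpr (by exact_mod_cast (by omega : d1 ≠ 1)))]
  rw [sum_Icc_pow_mul_pPoly d1 hk, gammaEven_eq, pPoly_eq, Chebyshev.C_eq_S_sub_S,
    div_eq_mul_one_div, ← one_div_pow]
  simp only [map_mul, map_pow, map_sub, map_natCast, map_ofNat]
  linear_combination Chebyshev.S ℝ (2 * k - 2) * hq
end

section
/- With Γ_{2k-1}(x)=2T_{2k-1}(x/2) and p_j(x)=U_j(x/2)-(1/(d1-1))U_{j-2}(x/2), one has the polynomial identity Γ_{2k-1}(x) = p_{2k-1}(x) - (d1-2)·( p_{2k-3}(x)/(d1-1) + p_{2k-5}(x)/(d1-1)^2 + ... + p_1(x)/(d1-1)^{k-1} ) for every k ≥ 1 and d1 ≥ 2. -/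
open Polynomial

/-- `Γ_{2k-1}(x) = 2T_{2k-1}(x/2)`. -/
noncomputable def gammaOdd (k : ℕ) : Polynomial ℝ :=
  (2 : Polynomial ℝ) *
    (Polynomial.Chebyshev.T ℝ (2 * k - 1 : ℤ)).comp (Polynomial.C (1 / 2) * Polynomial.X)

/-!
Write `V n = U_n(x/2)` and `r = 1/(d1-1)`, so that `p_n = V_n - r V_{n-2}` and
`Γ_{2k-1} = V_{2k-1} - V_{2k-3}` (from `2 T_n = U_n - U_{n-2}`). The weighted sum
`∑_{j=1}^{k-1} r^j p_{2k-1-2j}` telescopes to `r V_{2k-3} - r^k V_{-1} = r V_{2k-3}`, and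
`(d1-2) r = 1 - r` turns `p_{2k-1} - (d1-2) r V_{2k-3}` into `V_{2k-1} - V_{2k-3}`.
-/

section Telescope

variable {R : Type*} [CommRing R] (V p : ℤ → R) (r : R)

theorem sum_Icc_pow_mul_eq_sub (hp : ∀ n, p n = V n - r * V (n - 2)) (m : ℤ) (K : ℕ) :
    ∑ j ∈ Finset.Icc 1 K, r ^ j * p (m - 2 * j) =
      r * V (m - 2) - r ^ (K + 1) * V (m - 2 * K - 2) := by
  induction K with
  | zero => simp
  | succ K ih =>
    rw [Finset.sum_Icc_succ_top (by omega), ih, hp]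
    push_cast
    ring_nf

theorem sub_eq_sub_mul_sum_Icc_pow_mul (hp : ∀ n, p n = V n - r * V (n - 2)) {c : R}
    (hc : c * r = 1 - r) (m : ℤ) (K : ℕ) (hV : V (m - 2 * K - 2) = 0) :
    V m - V (m - 2) = p m - c * ∑ j ∈ Finset.Icc 1 K, r ^ j * p (m - 2 * j) := by
  rw [sum_Icc_pow_mul_eq_sub V p r hp, hV, hp]
  linear_combination V (m - 2) * hc

end Telescope

theorem gammaOdd_eq_sub (k : ℕ) :
    gammaOdd k = (Chebyshev.U ℝ (2 * k - 1)).comp (C (1 / 2) * X) -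
      (Chebyshev.U ℝ (2 * k - 1 - 2)).comp (C (1 / 2) * X) := by
  have h := Chebyshev.two_mul_T_eq_U_sub_U ℝ (2 * k - 1 - 2)
  rw [sub_add_cancel] at h
  rw [gammaOdd, ← sub_comp, ← h, mul_comp, ofNat_comp]
  norm_cast

/-- The polynomial identity
`Γ_{2k-1} = p_{2k-1} - (d1-2)·( p_{2k-3}/(d1-1) + p_{2k-5}/(d1-1)² + … + p_1/(d1-1)^{k-1} )`
for every `k ≥ 1` and `d1 ≥ 2`. -/
theorem stmt_9 (d1 : ℕ) (hd1 : 2 ≤ d1) (k : ℕ) (hk : 1 ≤ k) :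
    gammaOdd k =
      pPoly d1 (2 * (k : ℤ) - 1) -
        Polynomial.C ((d1 : ℝ) - 2) *
          ∑ j ∈ Finset.Icc 1 (k - 1),
            Polynomial.C (1 / ((d1 : ℝ) - 1) ^ j) *
              pPoly d1 (2 * (k : ℤ) - 1 - 2 * (j : ℤ)) := by
  have hd : (d1 : ℝ) - 1 ≠ 0 := by
    have : (2 : ℝ) ≤ d1 := by exact_mod_cast hd1
    linarith
  have hc : C ((d1 : ℝ) - 2) * C (1 / ((d1 : ℝ) - 1)) = 1 - C (1 / ((d1 : ℝ) - 1)) := by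
    rw [← C_mul, ← C_1, ← C_sub]
    congr 1
    field_simp
    ring
  have hV : (Chebyshev.U ℝ (2 * k - 1 - 2 * ((k - 1 : ℕ) : ℤ) - 2)).comp (C (1 / 2) * X) = 0 := by
    rw [show 2 * (k : ℤ) - 1 - 2 * ((k - 1 : ℕ) : ℤ) - 2 = -1 by push_cast [hk]; ring,
      Chebyshev.U_neg_one, zero_comp]
  simp only [← one_div_pow, map_pow]
  rw [gammaOdd_eq_sub]
  exact sub_eq_sub_mul_sum_Icc_pow_mul _ (pPoly d1) _ (fun _ => rfl) hc _ _ hV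
end

section
/- For every real K ≥ 1 and every natural number k, the maximum of |T_k(x)| over x ∈ [-K, K] equals ((K - sqrt(K^2-1))^k + (K + sqrt(K^2-1))^k)/2, where T_k is the Chebyshev polynomial of the first kind. -/
/-!
Writing `x = cosh u` with `u = arcosh x ≥ 0` for `x ≥ 1`, one has `T_n(x) = cosh (n u)`,
and `e^{±u} = x ± √(x² - 1)` turns this into the claimed closed form of `T_n(x)`.
The same identity shows that `T_n` is monotone on `[1, ∞)`, while `|T_n| ≤ 1 ≤ T_n(K)` on
`[-1, 1]` and `|T_n|` is even, so `|T_n|` attains its maximum over `[-K, K]` at `x = K`.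
-/

open Polynomial Real

namespace Polynomial.Chebyshev

theorem eval_T_real_of_one_le (n : ℕ) {x : ℝ} (hx : 1 ≤ x) :
    (T ℝ n).eval x = ((x - √(x ^ 2 - 1)) ^ n + (x + √(x ^ 2 - 1)) ^ n) / 2 := by
  have hexp_neg : exp (-arcosh x) = x - √(x ^ 2 - 1) := by
    rw [exp_neg, exp_arcosh hx, add_sqrt_self_sq_sub_one_inv hx]
  conv_lhs => rw [← cosh_arcosh hx]
  rw [T_real_cosh, cosh_eq, Int.cast_natCast, neg_mul_eq_mul_neg, exp_nat_mul, exp_nat_mul,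
    exp_arcosh hx, hexp_neg, add_comm]

theorem monotoneOn_eval_T_real (n : ℤ) : MonotoneOn (T ℝ n).eval (Set.Ici 1) := by
  intro x hx y hy hxy
  dsimp only
  rw [← cosh_arcosh hx, ← cosh_arcosh hy, T_real_cosh, T_real_cosh, cosh_le_cosh, abs_mul,
    abs_mul, abs_of_nonneg (arcosh_nonneg hx), abs_of_nonneg (arcosh_nonneg hy)]
  gcongr
  exact (arcosh_le_arcosh (by linarith [hx.out]) (by linarith [hy.out])).2 hxy

theorem abs_eval_T_real_neg (n : ℤ) (x : ℝ) : |(T ℝ n).eval (-x)| = |(T ℝ n).eval x| := by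
  rw [T_eval_neg, abs_mul, abs_unit_intCast, one_mul]

theorem abs_eval_T_real_le_eval_of_abs_le (n : ℤ) {x K : ℝ} (hK : 1 ≤ K) (hxK : |x| ≤ K) :
    |(T ℝ n).eval x| ≤ (T ℝ n).eval K := by
  rcases le_total |x| 1 with hx1 | h1x
  · exact (abs_eval_T_real_le_one n hx1).trans (one_le_eval_T_real n hK)
  have h_abs : |(T ℝ n).eval x| = |(T ℝ n).eval (|x|)| := by
    rcases abs_choice x with h | h <;> simp only [h, abs_eval_T_real_neg]
  rw [h_abs, abs_of_nonneg (zero_le_one.trans (one_le_eval_T_real n h1x))]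
  exact monotoneOn_eval_T_real n h1x (h1x.trans hxK) hxK

end Polynomial.Chebyshev

open Polynomial.Chebyshev

/-- For `K ≥ 1` and `k : ℕ`, the maximum of `|T_k(x)|` over `x ∈ [-K, K]` equals
`((K - √(K²-1))^k + (K + √(K²-1))^k)/2`, where `T_k` is the Chebyshev polynomial of the
first kind. -/
theorem stmt_10 (K : ℝ) (hK : 1 ≤ K) (k : ℕ) :
    IsGreatest ((fun x => |(Polynomial.Chebyshev.T ℝ (k : ℤ)).eval x|) '' Set.Icc (-K) K)
      (((K - Real.sqrt (K ^ 2 - 1)) ^ k + (K + Real.sqrt (K ^ 2 - 1)) ^ k) / 2) := by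
  rw [← eval_T_real_of_one_le k hK]
  have hT_nonneg : 0 ≤ (T ℝ k).eval K := zero_le_one.trans (one_le_eval_T_real k hK)
  refine ⟨⟨K, ⟨by linarith, le_rfl⟩, abs_of_nonneg hT_nonneg⟩, ?_⟩
  rintro _ ⟨x, hx, rfl⟩
  exact abs_eval_T_real_le_eval_of_abs_le k hK (abs_le.2 hx)
end

section
/- Let H be a subgraph of the complete bipartite graph K_{n,m} with e edges in which every vertex has degree at least 2, and let G be a uniformly random (d1,d2)-biregular bipartite graph with d2 ≤ d1 ≤ n^{1/3} and e = o(n^{1/3}). Then P(H ⊆ G) ≤ c·((d1-1)(d2-1)/(nm))^{e/2} for an absolute constant c, assuming the McKay subgraph bound P(H ⊆ G) ≤ (∏_i [g_i]_{h_i}) / [n·d1 - 4·d1^2 - 1]_{|H|}. -/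
/-!
Since every vertex of `H` has degree `0` or at least `2`, each falling factorial satisfies
`[g]_h ≤ g (g-1)^(h-1) ≤ (g (g-1))^(h/2)`; multiplying over both sides of the bipartition, whose
degree sums are both `e`, bounds the numerator of the McKay bound by
`(d₁(d₁-1))^(e/2) (d₂(d₂-1))^(e/2)`. The denominator is at least `(N - 4d₁² - e)^e` with
`N = n d₁ = m d₂`, and by Bernoulli's inequality this is at least `(14/27) N^e` because the size
assumptions give `27 e (4d₁² + e) ≤ 13 N`. Finally `N² = n m d₁ d₂`, so the quotient is
`(27/14) ((d₁-1)(d₂-1)/(nm))^(e/2)`.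
-/

open Finset

namespace Nat

theorem descFactorial_succ_le_mul_pow (d h : ℕ) :
    d.descFactorial (h + 1) ≤ d * (d - 1) ^ h := by
  rcases d with _ | d
  · simp
  · rw [succ_descFactorial_succ, Nat.add_sub_cancel]
    exact Nat.mul_le_mul_left _ (descFactorial_le_pow d h)

theorem descFactorial_sq_le (d h : ℕ) (hh : h ≠ 1) :
    d.descFactorial h ^ 2 ≤ (d * (d - 1)) ^ h := by
  obtain _ | _ | k := h
  · simp
  · exact absurd rfl hh
  have hsq : (d - 1) ^ 2 ≤ d * (d - 1) := by
    rw [sq]; exact Nat.mul_le_mul_right _ (sub_le d 1)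
  calc d.descFactorial (k + 2) ^ 2
      ≤ (d * (d - 1) ^ (k + 1)) ^ 2 := Nat.pow_le_pow_left (descFactorial_succ_le_mul_pow d _) 2
    _ = (d * (d - 1)) ^ 2 * ((d - 1) ^ 2) ^ k := by ring
    _ ≤ (d * (d - 1)) ^ 2 * (d * (d - 1)) ^ k := by gcongr
    _ = (d * (d - 1)) ^ (k + 2) := by ring

theorem cast_mul_sub_one (d : ℕ) : ((d * (d - 1) : ℕ) : ℝ) = (d : ℝ) * ((d : ℝ) - 1) := by
  rcases d with _ | d <;> push_cast <;> ring

theorem cast_mul_sub_one_nonneg (d : ℕ) : 0 ≤ (d : ℝ) * ((d : ℝ) - 1) := by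
  rw [← cast_mul_sub_one]; positivity

end Nat

theorem prod_descFactorial_sq_le {ι : Type*} (s : Finset ι) (d : ℕ) (f : ι → ℕ)
    (hf : ∀ i ∈ s, f i ≠ 1) :
    (∏ i ∈ s, d.descFactorial (f i)) ^ 2 ≤ (d * (d - 1)) ^ ∑ i ∈ s, f i := by
  rw [← prod_pow, ← prod_pow_eq_pow_sum]
  exact prod_le_prod' fun i hi => Nat.descFactorial_sq_le d (f i) (hf i hi)

theorem Real.le_rpow_half_of_sq_le {x y : ℝ} {k : ℕ} (hx : 0 ≤ x) (hy : 0 ≤ y)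
    (h : x ^ 2 ≤ y ^ k) : x ≤ y ^ ((k : ℝ) / 2) := by
  rw [div_eq_mul_one_div, Real.rpow_natCast_mul hy, ← Real.sqrt_eq_rpow]
  exact (Real.le_sqrt hx (by positivity)).2 h

theorem prod_descFactorial_le_rpow {ι : Type*} (s : Finset ι) (d : ℕ) (f : ι → ℕ)
    (hf : ∀ i ∈ s, f i ≠ 1) :
    ∏ i ∈ s, (d.descFactorial (f i) : ℝ) ≤
      ((d : ℝ) * ((d : ℝ) - 1)) ^ (((∑ i ∈ s, f i : ℕ) : ℝ) / 2) := by
  rw [← Nat.cast_mul_sub_one]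
  apply Real.le_rpow_half_of_sq_le (by positivity) (by positivity)
  exact_mod_cast prod_descFactorial_sq_le s d f hf

theorem prod_descFactorial_mul_prod_descFactorial_le {ι κ : Type*} [Fintype ι] [Fintype κ]
    {d₁ d₂ e : ℕ} {f : ι → ℕ} {g : κ → ℕ} (hf : ∀ i, f i ≠ 1) (hg : ∀ j, g j ≠ 1)
    (hfe : ∑ i, f i = e) (hge : ∑ j, g j = e) :
    (∏ i, (d₁.descFactorial (f i) : ℝ)) * ∏ j, (d₂.descFactorial (g j) : ℝ) ≤
      ((d₁ : ℝ) * (d₁ - 1)) ^ ((e : ℝ) / 2) * ((d₂ : ℝ) * (d₂ - 1)) ^ ((e : ℝ) / 2) := by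
  have hnum₁ := prod_descFactorial_le_rpow univ d₁ f fun i _ => hf i
  have hnum₂ := prod_descFactorial_le_rpow univ d₂ g fun j _ => hg j
  rw [hfe] at hnum₁
  rw [hge] at hnum₂
  exact mul_le_mul hnum₁ hnum₂ (by positivity) (Real.rpow_nonneg (Nat.cast_mul_sub_one_nonneg d₁) _)

theorem one_sub_mul_div_mul_pow_le_sub_pow {a b : ℝ} (ha : 0 < a) (hb : b ≤ 2 * a) (n : ℕ) :
    (1 - n * b / a) * a ^ n ≤ (a - b) ^ n := by
  have hba : -2 ≤ -(b / a) := by rw [neg_le, neg_neg, div_le_iff₀ ha]; linarith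
  have hbern := one_add_mul_le_pow hba n
  calc (1 - n * b / a) * a ^ n = (1 + n * -(b / a)) * a ^ n := by ring
    _ ≤ (1 + -(b / a)) ^ n * a ^ n := by gcongr
    _ = (a - b) ^ n := by rw [← mul_pow]; congr 1; field_simp; ring

theorem one_sub_mul_div_mul_pow_le_descFactorial {N s e : ℕ} (h : s + e ≤ N) :
    (1 - e * (s + e) / N) * (N : ℝ) ^ e ≤ ((N - s - 1).descFactorial e : ℝ) := by
  rcases e.eq_zero_or_pos with rfl | he
  · simp
  have hN : (0 : ℝ) < N := by exact_mod_cast (show 0 < N by omega)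
  have hsub : N - s - 1 + 1 - e = N - (s + e) := by omega
  have hdesc := Nat.pow_sub_le_descFactorial (N - s - 1) e
  rw [hsub] at hdesc
  have hb : (s : ℝ) + e ≤ 2 * N := by exact_mod_cast (by omega : s + e ≤ 2 * N)
  calc (1 - e * (s + e) / N) * (N : ℝ) ^ e ≤ ((N : ℝ) - (s + e)) ^ e :=
        one_sub_mul_div_mul_pow_le_sub_pow hN hb e
    _ = ((N - (s + e) : ℕ) : ℝ) ^ e := by rw [Nat.cast_sub h, Nat.cast_add]
    _ ≤ ((N - s - 1).descFactorial e : ℝ) := by exact_mod_cast hdesc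

theorem mul_four_sq_add_le_of_pow_three_le {n d e : ℕ} (hd : d ^ 3 ≤ n) (he : 27 * e ^ 3 ≤ n)
    (hd1 : 1 ≤ d) (he1 : 1 ≤ e) : 27 * (e * (4 * d ^ 2 + e)) ≤ 13 * (n * d) := by
  have hn : 27 ≤ n := by nlinarith [Nat.one_le_pow 3 e he1]
  have hlin : 9 * e * d ≤ n := by
    refine le_of_pow_le_pow_left₀ three_ne_zero (Nat.zero_le n) ?_
    calc (9 * e * d) ^ 3 = 27 * (27 * e ^ 3) * d ^ 3 := by ring
      _ ≤ 27 * n * n := by gcongr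
      _ ≤ n * n * n := Nat.mul_le_mul_right _ (Nat.mul_le_mul_right _ hn)
      _ = n ^ 3 := by ring
  have hquad : 27 * e ^ 2 ≤ n * d := by
    nlinarith [Nat.pow_le_pow_right he1 (show 2 ≤ 3 by norm_num)]
  nlinarith

theorem fourteen_div_twentySeven_mul_pow_le_descFactorial {n d e : ℕ} (hd : d ^ 3 ≤ n)
    (he : 27 * e ^ 3 ≤ n) (hd1 : 1 ≤ d) (he1 : 1 ≤ e) :
    14 / 27 * ((n * d : ℕ) : ℝ) ^ e ≤ ((n * d - 4 * d ^ 2 - 1).descFactorial e : ℝ) := by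
  have hkey := mul_four_sq_add_le_of_pow_three_le hd he hd1 he1
  have hle : 4 * d ^ 2 + e ≤ n * d := by nlinarith
  refine le_trans ?_ (one_sub_mul_div_mul_pow_le_descFactorial hle)
  gcongr
  have hN : (0 : ℝ) < ((n * d : ℕ) : ℝ) := by
    have : 0 < n := (Nat.one_le_pow 3 d hd1).trans hd
    positivity
  rw [le_sub_comm, div_le_iff₀ hN]
  have : 27 * ((e : ℝ) * ((4 * d ^ 2 : ℕ) + e)) ≤ 13 * ((n * d : ℕ) : ℝ) := by exact_mod_cast hkey
  linarith

theorem biregular_rpow_ratio {n m d₁ d₂ : ℝ} (hn : 0 < n) (hm : m ≠ 0) (hd₁ : 1 ≤ d₁)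
    (hd₂ : 1 ≤ d₂) (h : n * d₁ = m * d₂) (e : ℕ) :
    (d₁ * (d₁ - 1)) ^ ((e : ℝ) / 2) * (d₂ * (d₂ - 1)) ^ ((e : ℝ) / 2) / (n * d₁) ^ e =
      ((d₁ - 1) * (d₂ - 1) / (n * m)) ^ ((e : ℝ) / 2) := by
  have hA₁ : 0 ≤ d₁ * (d₁ - 1) := by nlinarith
  have hA₂ : 0 ≤ d₂ * (d₂ - 1) := by nlinarith
  have hpow : (n * d₁) ^ e = ((n * d₁) ^ 2) ^ ((e : ℝ) / 2) := by
    rw [← Real.rpow_natCast_mul (by positivity), Nat.cast_two, mul_div_cancel₀ _ two_ne_zero,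
      Real.rpow_natCast]
  rw [hpow, ← Real.mul_rpow hA₁ hA₂, ← Real.div_rpow (mul_nonneg hA₁ hA₂) (by positivity)]
  congr 1
  have hd₁0 : d₁ ≠ 0 := by positivity
  have hd₂0 : d₂ ≠ 0 := by positivity
  rw [sq]
  nth_rewrite 2 [h]
  field_simp

/-- There is an absolute constant `c > 0` such that: if `H` is a subgraph of `K_{n,m}`
with `e` edges in which every (non-isolated) vertex has degree at least 2 (degree
sequences `h1` on `V1`, `h2` on `V2`), `G` is a uniformly random (d1,d2)-biregular
bipartite graph with `d2 ≤ d1 ≤ n^{1/3}` and `e ≤ n^{1/3}/3`, and `P = P(H ⊆ G)`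
satisfies the McKay subgraph bound
`P ≤ (∏ᵢ [gᵢ]_{hᵢ}) / [n·d1 - 4·d1² - 1]_e`, then
`P ≤ c·((d1-1)(d2-1)/(nm))^{e/2}`. -/
theorem stmt_13 :
    ∃ c : ℝ, 0 < c ∧
      ∀ (n m d1 d2 e : ℕ) (h1 : Fin n → ℕ) (h2 : Fin m → ℕ) (P : ℝ),
        d2 ≤ d1 → d1 ^ 3 ≤ n → 27 * e ^ 3 ≤ n → n * d1 = m * d2 →
        (∀ i, h1 i = 0 ∨ 2 ≤ h1 i) → (∀ j, h2 j = 0 ∨ 2 ≤ h2 j) →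
        (∑ i, h1 i = e) → (∑ j, h2 j = e) →
        P ≤ ((∏ i, (d1.descFactorial (h1 i) : ℝ)) * ∏ j, (d2.descFactorial (h2 j) : ℝ)) /
            ((n * d1 - 4 * d1 ^ 2 - 1).descFactorial e : ℝ) →
        P ≤ c * ((((d1 : ℝ) - 1) * ((d2 : ℝ) - 1)) / ((n : ℝ) * (m : ℝ))) ^ ((e : ℝ) / 2) := by
  refine ⟨27 / 14, by norm_num, ?_⟩
  intro n m d1 d2 e h1 h2 P hd hd1n hen hbal hh1 hh2 hs1 hs2 hP
  have hP' : P ≤ ((d1 : ℝ) * (d1 - 1)) ^ ((e : ℝ) / 2) * ((d2 : ℝ) * (d2 - 1)) ^ ((e : ℝ) / 2) /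
      ((n * d1 - 4 * d1 ^ 2 - 1).descFactorial e : ℝ) :=
    hP.trans (div_le_div_of_nonneg_right (prod_descFactorial_mul_prod_descFactorial_le
      (fun i => by have := hh1 i; omega) (fun j => by have := hh2 j; omega) hs1 hs2)
      (Nat.cast_nonneg _))
  rcases e.eq_zero_or_pos with rfl | he
  · norm_num at hP' ⊢
    linarith
  have hz : (e : ℝ) / 2 ≠ 0 := by positivity
  rcases Nat.lt_or_ge d2 2 with hd2 | hd2
  · obtain rfl | rfl : d2 = 0 ∨ d2 = 1 := by omega
    · obtain rfl : d1 = 0 := by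
        rcases Nat.mul_eq_zero.1 (hbal.trans (mul_zero m)) with rfl | h
        · simpa using hd1n
        · exact h
      norm_num [Real.zero_rpow hz] at hP' ⊢
      exact hP'.trans (by positivity)
    · norm_num [Real.zero_rpow hz] at hP' ⊢
      exact hP'
  have hd1 : 0 < d1 := by omega
  have hn : 0 < n := (Nat.one_le_pow 3 d1 hd1).trans hd1n
  have hm : 0 < m := Nat.pos_of_mul_pos_right (hbal ▸ Nat.mul_pos hn hd1)
  have hbalR : (n : ℝ) * d1 = m * d2 := by exact_mod_cast hbal
  refine hP'.trans ?_
  calc _ ≤ _ / (14 / 27 * ((n * d1 : ℕ) : ℝ) ^ e) :=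
        div_le_div_of_nonneg_left (mul_nonneg (Real.rpow_nonneg (Nat.cast_mul_sub_one_nonneg d1) _)
          (Real.rpow_nonneg (Nat.cast_mul_sub_one_nonneg d2) _)) (by positivity)
          (fourteen_div_twentySeven_mul_pow_le_descFactorial hd1n hen hd1 he)
    _ = _ := by
      rw [div_mul_eq_div_div_swap, Nat.cast_mul, biregular_rpow_ratio (by positivity)
        (by positivity) (by exact_mod_cast hd1) (by exact_mod_cast (by omega : 1 ≤ d2)) hbalR]
      ring
end

section
/- Let Y = Σ_{j} c_j P_j be a finite linear combination with positive coefficients c_j of independent Poisson random variables P_j. Then for any t > 0, P(|Y - E[Y]| > t) ≤ 2·exp( -(t/(8c*)) · log(1 + t·c*/(2·Var(Y))) ), where c* = max_j c_j. In particular, for CNBW_k^{(∞)} = Σ_{j | k} 2j·C_j^{(∞)} with C_j^{(∞)} independent Poisson of mean ((d1-1)(d2-1))^j/(2j): P(|CNBW_k^{(∞)} - E CNBW_k^{(∞)}| > t) ≤ 2·exp( -(t/(8k))·log(1 + t/(2k·((d1-1)(d2-1))^k)) ). -/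
/-!
The cumulant generating function of `Y = ∑ⱼ cⱼ Pⱼ` is `a ↦ ∑ⱼ rⱼ (e^{a cⱼ} - 1)`. Its first two
derivatives at `0` give `E Y = ∑ⱼ rⱼ cⱼ` and `Var Y = ∑ⱼ rⱼ cⱼ²`, and the bound
`eˣ - 1 - x ≤ x² e^{|x|}` shows `cgf(a) ≤ a E Y + a² Var Y e^{|a| c*}`. The Chernoff bound at
`±s` then controls both tails by `exp(-s t + s² Var Y e^{s c*})`, and the choice
`e^{s c*} = √(1 + B)` with `B = t c* / (2 Var Y)` makes this exponent at most
`-(t / (8 c*)) log(1 + B)`.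
-/

open MeasureTheory ProbabilityTheory

open Real
open scoped Nat NNReal

lemma Real.exp_sub_one_sub_le_sq_mul_exp_abs (x : ℝ) : exp x - 1 - x ≤ x ^ 2 * exp |x| := by
  have h := Complex.norm_exp_sub_sum_le_norm_mul_exp x 2
  norm_num [Finset.sum_range_succ, ← Complex.ofReal_exp] at h
  have hcast : (exp x : ℂ) - (1 + x) = ((exp x - 1 - x : ℝ) : ℂ) := by push_cast; ring
  rw [hcast, Complex.norm_real, Real.norm_eq_abs] at h
  exact (le_abs_self _).trans h

lemma Real.hasSum_pow_div_factorial (x : ℝ) : HasSum (fun n ↦ x ^ n / n !) (exp x) :=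
  exp_eq_exp_ℝ ▸ NormedSpace.expSeries_div_hasSum_exp x

lemma Real.mul_log_le_sq_sub_one {u : ℝ} (hu : 1 ≤ u) : u * log u ≤ u ^ 2 - 1 := by
  nlinarith [log_le_sub_one_of_pos (by linarith : 0 < u)]

lemma Real.exists_nonneg_neg_mul_add_sq_mul_exp_le {t K v : ℝ} (ht : 0 < t) (hK : 0 < K)
    (hv : 0 < v) : ∃ s, 0 ≤ s ∧
      -(s * t) + s ^ 2 * v * exp (s * K) ≤ -(t / (8 * K)) * log (1 + t * K / (2 * v)) := by
  set B := t * K / (2 * v)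
  have hB : 0 < B := by positivity
  set s := log (1 + B) / (2 * K)
  have hs : 0 ≤ s := div_nonneg (log_nonneg (by linarith)) (by positivity)
  set u := exp (s * K)
  have hlog : log (1 + B) = 2 * K * s := by simp only [s]; field_simp
  have hu : u ^ 2 = 1 + B := by
    rw [← exp_nat_mul, show ((2 : ℕ) : ℝ) * (s * K) = log (1 + B) by rw [hlog]; push_cast; ring,
      exp_log (by linarith)]
  -- `u log u ≤ u² - 1 = B`, and `log u = s K`
  have key : s * v * u ≤ t / 2 := by
    have h1 := mul_log_le_sq_sub_one (one_le_exp (by positivity) : 1 ≤ u)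
    rw [log_exp, hu] at h1
    have hBv : v * B = t * K / 2 := by simp only [B]; field_simp
    have h2 : s * v * u * K ≤ t / 2 * K := by nlinarith [mul_le_mul_of_nonneg_left h1 hv.le]
    exact le_of_mul_le_mul_right h2 hK
  refine ⟨s, hs, ?_⟩
  have hrhs : -(t / (8 * K)) * log (1 + B) = -(s * t) / 4 := by rw [hlog]; field_simp; ring
  rw [hrhs]
  nlinarith [mul_le_mul_of_nonneg_left key hs, mul_nonneg hs ht.le]

namespace ProbabilityTheory

section Poisson

lemma exp_neg_mul_pow_div_factorial_mul_exp (r : ℝ≥0) (a : ℝ) (n : ℕ) :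
    exp (-r) * r ^ n / n ! * exp (a * n) = exp (-r) * ((r * exp a) ^ n / n !) := by
  rw [mul_comm a, exp_nat_mul, mul_pow]
  ring

lemma integrable_exp_mul_poissonMeasure (r : ℝ≥0) (a : ℝ) :
    Integrable (fun n : ℕ ↦ exp (a * n)) (poissonMeasure r) := by
  refine integrable_poissonMeasure_iff.2 ?_
  simp only [norm_eq_abs, abs_exp, exp_neg_mul_pow_div_factorial_mul_exp]
  exact (summable_pow_div_factorial _).mul_left _

lemma mgf_natCast_poissonMeasure (r : ℝ≥0) (a : ℝ) :
    mgf (fun n : ℕ ↦ (n : ℝ)) (poissonMeasure r) a = exp (r * (exp a - 1)) := by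
  rw [mgf, integral_poissonMeasure]
  simp only [smul_eq_mul, exp_neg_mul_pow_div_factorial_mul_exp]
  rw [tsum_mul_left, (hasSum_pow_div_factorial _).tsum_eq, ← exp_add]
  ring_nf

variable {Ω : Type*} [MeasurableSpace Ω] {μ : Measure Ω} {P : Ω → ℕ} {r : ℝ≥0}

lemma integrable_exp_mul_const_mul_of_map_eq_poissonMeasure (hP : Measurable P)
    (hdist : μ.map P = poissonMeasure r) (c a : ℝ) :
    Integrable (fun ω ↦ exp (a * (c * P ω))) μ := by
  have h := integrable_exp_mul_poissonMeasure r (a * c)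
  rw [← hdist, integrable_map_measure (by fun_prop) hP.aemeasurable] at h
  simpa only [Function.comp_def, mul_assoc] using h

lemma cgf_const_mul_of_map_eq_poissonMeasure (hP : Measurable P)
    (hdist : μ.map P = poissonMeasure r) (c a : ℝ) :
    cgf (fun ω ↦ c * P ω) μ a = r * (exp (a * c) - 1) := by
  rw [cgf, mgf_const_mul, ← Function.comp_def (fun n : ℕ ↦ (n : ℝ)), ← mgf_map hP.aemeasurable
    (by fun_prop), hdist, mgf_natCast_poissonMeasure, log_exp, mul_comm c]

end Poisson

section CgfDerivatives

variable {Ω : Type*} [MeasurableSpace Ω] {μ : Measure Ω} {X : Ω → ℝ}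

lemma zero_mem_interior_integrableExpSet (h : ∀ a, Integrable (fun ω ↦ exp (a * X ω)) μ) :
    (0 : ℝ) ∈ interior (integrableExpSet X μ) := by
  rw [show integrableExpSet X μ = Set.univ from Set.eq_univ_of_forall h, interior_univ]
  trivial

variable [IsProbabilityMeasure μ]

lemma integral_eq_deriv_cgf_zero (h : ∀ a, Integrable (fun ω ↦ exp (a * X ω)) μ) :
    μ[X] = deriv (cgf X μ) 0 := by
  simp [deriv_cgf_zero (zero_mem_interior_integrableExpSet h)]

lemma variance_eq_iteratedDeriv_two_cgf_zero (h : ∀ a, Integrable (fun ω ↦ exp (a * X ω)) μ) :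
    Var[X; μ] = iteratedDeriv 2 (cgf X μ) 0 := by
  simpa [tilted_const] using variance_tilted_mul (zero_mem_interior_integrableExpSet h)

end CgfDerivatives

section PoissonSumCgf

variable {J : Type*} [Fintype J] (r c : J → ℝ)

/-- The cumulant generating function of `∑ⱼ cⱼ Pⱼ` for independent `Pⱼ ~ Poisson(rⱼ)`. -/
noncomputable def poissonSumCgf (a : ℝ) : ℝ := ∑ j, r j * (exp (a * c j) - 1)

lemma hasDerivAt_poissonSumCgf (a : ℝ) :
    HasDerivAt (poissonSumCgf r c) (∑ j, r j * c j * exp (a * c j)) a := by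
  have h := HasDerivAt.fun_sum (u := Finset.univ) fun j _ ↦
    (((hasDerivAt_mul_const (c j)).exp (x := a)).sub_const 1).const_mul (r j)
  exact h.congr_deriv (Finset.sum_congr rfl fun j _ ↦ by ring)

lemma deriv_poissonSumCgf_zero : deriv (poissonSumCgf r c) 0 = ∑ j, r j * c j := by
  simp [(hasDerivAt_poissonSumCgf r c 0).deriv]

lemma iteratedDeriv_two_poissonSumCgf_zero :
    iteratedDeriv 2 (poissonSumCgf r c) 0 = ∑ j, r j * c j ^ 2 := by
  have hderiv : deriv (poissonSumCgf r c) = fun a ↦ ∑ j, r j * c j * exp (a * c j) :=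
    funext fun a ↦ (hasDerivAt_poissonSumCgf r c a).deriv
  have h := HasDerivAt.fun_sum (u := Finset.univ) fun j _ ↦
    ((hasDerivAt_mul_const (c j)).exp (x := 0)).const_mul (r j * c j)
  rw [iteratedDeriv_succ, iteratedDeriv_one, hderiv, h.deriv]
  simp [sq, mul_assoc]

lemma poissonSumCgf_le {K : ℝ} (hr : ∀ j, 0 ≤ r j) (hc : ∀ j, |c j| ≤ K) (a : ℝ) :
    poissonSumCgf r c a ≤ a * ∑ j, r j * c j + a ^ 2 * (∑ j, r j * c j ^ 2) * exp (|a| * K) := by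
  simp only [poissonSumCgf, Finset.mul_sum, Finset.sum_mul, ← Finset.sum_add_distrib]
  refine Finset.sum_le_sum fun j _ ↦ ?_
  have hx : |a * c j| ≤ |a| * K := by
    rw [abs_mul]; exact mul_le_mul_of_nonneg_left (hc j) (abs_nonneg a)
  have h := exp_sub_one_sub_le_sq_mul_exp_abs (a * c j)
  have h' : exp |a * c j| ≤ exp (|a| * K) := exp_le_exp.2 hx
  nlinarith [mul_le_mul_of_nonneg_left h' (sq_nonneg (a * c j)), hr j]

end PoissonSumCgf

section PoissonLinearCombination

variable {Ω : Type*} [MeasurableSpace Ω] {μ : Measure Ω}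
  {J : Type*} [Fintype J] {P : J → Ω → ℕ} {r : J → ℝ≥0}

lemma integrable_exp_mul_sum_const_mul_poisson [IsProbabilityMeasure μ]
    (hmeas : ∀ j, Measurable (P j)) (hindep : iIndepFun P μ)
    (hdist : ∀ j, μ.map (P j) = poissonMeasure (r j)) (c : J → ℝ) (a : ℝ) :
    Integrable (fun ω ↦ exp (a * ∑ j, c j * (P j ω : ℝ))) μ := by
  have h := (hindep.comp (fun j (n : ℕ) ↦ c j * (n : ℝ)) fun _ ↦ .of_discrete)
    |>.integrable_exp_mul_sum (t := a) (fun j ↦ by fun_prop) (s := Finset.univ) fun j _ ↦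
    integrable_exp_mul_const_mul_of_map_eq_poissonMeasure (hmeas j) (hdist j) (c j) a
  simpa [Finset.sum_fn] using h

lemma cgf_sum_const_mul_poisson (hmeas : ∀ j, Measurable (P j)) (hindep : iIndepFun P μ)
    (hdist : ∀ j, μ.map (P j) = poissonMeasure (r j)) (c : J → ℝ) :
    cgf (fun ω ↦ ∑ j, c j * (P j ω : ℝ)) μ = poissonSumCgf (fun j ↦ r j) c := by
  ext a
  have h := (hindep.comp (fun j (n : ℕ) ↦ c j * (n : ℝ)) fun _ ↦ .of_discrete).cgf_sum
    (t := a) (fun j ↦ by fun_prop) (s := Finset.univ) fun j _ ↦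
    integrable_exp_mul_const_mul_of_map_eq_poissonMeasure (hmeas j) (hdist j) (c j) a
  simp only [Finset.sum_fn, Function.comp_def] at h
  rw [h]
  exact Finset.sum_congr rfl fun j _ ↦
    cgf_const_mul_of_map_eq_poissonMeasure (hmeas j) (hdist j) _ _

end PoissonLinearCombination

section Tail

variable {Ω : Type*} [MeasurableSpace Ω] {μ : Measure Ω} [IsProbabilityMeasure μ] {X : Ω → ℝ}
  {m v K : ℝ}

lemma measureReal_abs_sub_gt_le_two_mul_exp
    (hint : ∀ a, Integrable (fun ω ↦ exp (a * X ω)) μ)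
    (hcgf : ∀ a, cgf X μ a ≤ a * m + a ^ 2 * v * exp (|a| * K)) {s : ℝ} (hs : 0 ≤ s) (t : ℝ) :
    μ.real {ω | t < |X ω - m|} ≤ 2 * exp (-(s * t) + s ^ 2 * v * exp (s * K)) := by
  have hupper : μ.real {ω | m + t ≤ X ω} ≤ exp (-(s * t) + s ^ 2 * v * exp (s * K)) := by
    refine (measure_ge_le_exp_cgf _ hs (hint s)).trans (exp_le_exp.2 ?_)
    have := hcgf s
    rw [abs_of_nonneg hs] at this
    linarith
  have hlower : μ.real {ω | X ω ≤ m - t} ≤ exp (-(s * t) + s ^ 2 * v * exp (s * K)) := by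
    refine (measure_le_le_exp_cgf _ (neg_nonpos.2 hs) (hint (-s))).trans (exp_le_exp.2 ?_)
    have := hcgf (-s)
    rw [abs_neg, abs_of_nonneg hs, neg_sq] at this
    linarith
  calc μ.real {ω | t < |X ω - m|}
      ≤ μ.real ({ω | m + t ≤ X ω} ∪ {ω | X ω ≤ m - t}) := by
        refine measureReal_mono (fun ω hω ↦ ?_)
        rcases lt_abs.1 (show t < |X ω - m| from hω) with h | h
        exacts [Or.inl (show m + t ≤ X ω by linarith), Or.inr (show X ω ≤ m - t by linarith)]
    _ ≤ μ.real {ω | m + t ≤ X ω} + μ.real {ω | X ω ≤ m - t} := measureReal_union_le _ _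
    _ ≤ 2 * exp (-(s * t) + s ^ 2 * v * exp (s * K)) := by linarith

lemma measureReal_abs_sub_gt_le_of_cgf_le
    (hint : ∀ a, Integrable (fun ω ↦ exp (a * X ω)) μ)
    (hcgf : ∀ a, cgf X μ a ≤ a * m + a ^ 2 * v * exp (|a| * K))
    (hK : 0 < K) (hv : 0 ≤ v) {t : ℝ} (ht : 0 < t) :
    μ.real {ω | t < |X ω - m|} ≤ 2 * exp (-(t / (8 * K)) * log (1 + t * K / (2 * v))) := by
  rcases hv.eq_or_lt with rfl | hv
  · simpa using (measureReal_le_one (μ := μ)).trans one_le_two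
  obtain ⟨s, hs, hexp⟩ := exists_nonneg_neg_mul_add_sq_mul_exp_le ht hK hv
  exact (measureReal_abs_sub_gt_le_two_mul_exp hint hcgf hs t).trans
    (mul_le_mul_of_nonneg_left (exp_le_exp.2 hexp) zero_le_two)

end Tail

end ProbabilityTheory

theorem stmt_15_general {Ω : Type*} [MeasurableSpace Ω] (μ : Measure Ω) [IsProbabilityMeasure μ]
    {J : Type*} [Fintype J]
    (c : J → ℝ) (hc : ∀ j, 0 < c j)
    (P : J → Ω → ℕ) (hmeas : ∀ j, Measurable (P j))
    (hindep : ProbabilityTheory.iIndepFun P μ)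
    (r : J → NNReal) (hdist : ∀ j, μ.map (P j) = ProbabilityTheory.poissonMeasure (r j))
    (Y : Ω → ℝ) (hY : Y = fun ω => ∑ j, c j * (P j ω : ℝ))
    (cstar : ℝ) (hcstar : IsGreatest (Set.range c) cstar)
    (t : ℝ) (ht : 0 < t) :
    (μ {ω | t < |Y ω - ∫ ω', Y ω' ∂μ|}).toReal ≤
      2 * Real.exp (-(t / (8 * cstar)) *
        Real.log (1 + t * cstar / (2 * ProbabilityTheory.variance Y μ))) := by
  obtain ⟨j₀, hj₀⟩ := hcstar.1
  have hcstar_pos : 0 < cstar := hj₀ ▸ hc j₀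
  have hc_abs : ∀ j, |c j| ≤ cstar := fun j ↦ (abs_of_pos (hc j)).trans_le (hcstar.2 ⟨j, rfl⟩)
  have hint := integrable_exp_mul_sum_const_mul_poisson hmeas hindep hdist c
  have hcgf := cgf_sum_const_mul_poisson hmeas hindep hdist c
  subst hY
  rw [integral_eq_deriv_cgf_zero hint, variance_eq_iteratedDeriv_two_cgf_zero hint, hcgf,
    deriv_poissonSumCgf_zero, iteratedDeriv_two_poissonSumCgf_zero]
  refine measureReal_abs_sub_gt_le_of_cgf_le hint (fun a ↦ ?_) hcstar_pos
    (Finset.sum_nonneg fun j _ ↦ by positivity) ht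
  rw [hcgf]
  exact poissonSumCgf_le _ _ (fun j ↦ (r j).coe_nonneg) hc_abs a

/-- Let `Y = Σ_j c_j P_j` be a finite linear combination, with positive coefficients
`c_j`, of independent Poisson random variables `P_j`. Then for any `t > 0`,
`P(|Y - E Y| > t) ≤ 2·exp( -(t/(8c*))·log(1 + t·c*/(2·Var Y)) )`, where
`c* = max_j c_j`. -/
theorem stmt_15 {Ω : Type*} [MeasurableSpace Ω] (μ : Measure Ω) [IsProbabilityMeasure μ]
    {J : Type*} [Fintype J] [Nonempty J]
    (c : J → ℝ) (hc : ∀ j, 0 < c j)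
    (P : J → Ω → ℕ) (hmeas : ∀ j, Measurable (P j))
    (hindep : ProbabilityTheory.iIndepFun P μ)
    (r : J → NNReal) (hdist : ∀ j, μ.map (P j) = ProbabilityTheory.poissonMeasure (r j))
    (Y : Ω → ℝ) (hY : Y = fun ω => ∑ j, c j * (P j ω : ℝ))
    (cstar : ℝ) (hcstar : IsGreatest (Set.range c) cstar)
    (t : ℝ) (ht : 0 < t) :
    (μ {ω | t < |Y ω - ∫ ω', Y ω' ∂μ|}).toReal ≤
      2 * Real.exp (-(t / (8 * cstar)) *
        Real.log (1 + t * cstar / (2 * ProbabilityTheory.variance Y μ))) :=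
  stmt_15_general μ c hc P hmeas hindep r hdist Y hY cstar hcstar t ht
end
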